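/- arXiv:1406.7858 — 6 statements merged into one kernel-verified Lean document; each statement's English description precedes it below -/
import Mathlib

section
/- Let M ≥ 2 and k₂ ≥ 1 be integers, let γ_D > 0, γ_E > 0, and ξ > 1 be real numbers. Then ∫₀^∞ [1 − e^{−(ξ(1+y)−1)/γ_D}]^{M+k₂} · ((Mk₂+1)/γ_E) e^{−y/γ_E} [1 − e^{−y/γ_E}]^{Mk₂} dy = (Mk₂+1) · Σ_{i=0}^{M+k₂} C(M+k₂, i) (−1)^i e^{−(ξ−1)i/γ_D} · B((ξ γ_E i + γ_D)/γ_D, Mk₂+1), where C(n,i) is the binomial coefficient and B is the Beta function. (This is Theorem 1: the secrecy outage probability of the M-source GNC scheme with partial CSI, computed using the high-SNR approximations F_{γD}(x) = (1−e^{−x/γ_D})^{M+k₂} for the legitimate destination's SNR CDF and p_{γE}(y) = ((Mk₂+1)/γ_E) e^{−y/γ_E}(1−e^{−y/γ_E})^{Mk₂} for the eavesdropper's SNR density, with ξ = 2^{R_s/R_GNC}.) -/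
open MeasureTheory Real Filter Topology Finset

/-- The Beta function `B(x,y) = ∫₀¹ t^(x-1) (1-t)^(y-1) dt`. -/
noncomputable def Beta (x y : ℝ) : ℝ := ∫ t in (0:ℝ)..1, t ^ (x - 1) * (1 - t) ^ (y - 1)

/-! Substituting `t = e^{-y/γ_E}` turns the eavesdropper's density into the Beta weight
`(M k₂ + 1) (1 - t)^{M k₂} dt`, and the term `e^{-(ξ i / γ_D) y}` of the binomial expansion of the
destination's CDF into `t^{ξ γ_E i / γ_D}`. Equivalently, without changing variables: once
`(1 - e^{-y/γ_E})^{M k₂}` and `(1 - t)^{M k₂}` are expanded too, both sides become the same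
alternating sums of `1 / (x + j)`, by `∫₀^∞ e^{-b y} dy = 1 / b` and
`∫₀¹ t^{x-1+j} dt = 1 / (x + j)`. -/

lemma one_sub_pow_eq_sum {R : Type*} [CommRing R] (A : R) (n : ℕ) :
    (1 - A) ^ n = ∑ i ∈ range (n + 1), (n.choose i : R) * (-1) ^ i * A ^ i := by
  rw [sub_eq_neg_add, add_pow]
  refine sum_congr rfl fun i _ => ?_
  rw [neg_pow, one_pow]
  ring

lemma Beta_natCast_add_one {x : ℝ} (hx : 0 < x) (m : ℕ) :
    Beta x (m + 1) = ∑ j ∈ range (m + 1), (m.choose j : ℝ) * (-1) ^ j / (x + j) := by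
  have hexp : ∀ j : ℕ, -1 < x - 1 + j := fun j => by linarith [j.cast_nonneg (α := ℝ)]
  have hexpand : ∀ᵐ t : ℝ, t ∈ Set.uIoc (0 : ℝ) 1 →
      t ^ (x - 1) * (1 - t) ^ ((m : ℝ) + 1 - 1) =
        ∑ j ∈ range (m + 1), (m.choose j : ℝ) * (-1) ^ j * t ^ (x - 1 + j) := by
    refine Eventually.of_forall fun t ht => ?_
    have ht : 0 < t := (Set.uIoc_of_le (zero_le_one (α := ℝ)) ▸ ht).1
    rw [add_sub_cancel_right, rpow_natCast, one_sub_pow_eq_sum, mul_sum]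
    refine sum_congr rfl fun j _ => ?_
    rw [rpow_add ht, rpow_natCast]
    ring
  unfold Beta
  rw [intervalIntegral.integral_congr_ae hexpand, intervalIntegral.integral_finsetSum
    fun j _ => (intervalIntegral.intervalIntegrable_rpow' (hexp j)).const_mul _]
  refine sum_congr rfl fun j _ => ?_
  rw [intervalIntegral.integral_const_mul, integral_rpow (Or.inl (hexp j))]
  have hxj : x - 1 + j + 1 = x + j := by ring
  rw [hxj, one_rpow, zero_rpow (by positivity), sub_zero, mul_one_div]

lemma exp_neg_mul_mul_one_sub_exp_pow_eq_sum (a γ y : ℝ) (m : ℕ) :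
    exp (-a * y) * (((m + 1 : ℕ) : ℝ) / γ * exp (-y / γ) * (1 - exp (-y / γ)) ^ m) =
      ∑ j ∈ range (m + 1),
        ((m + 1 : ℕ) : ℝ) / γ * ((m.choose j : ℝ) * (-1) ^ j) * exp (-(a + (j + 1) / γ) * y) := by
  rw [one_sub_pow_eq_sum, mul_sum, mul_sum]
  refine sum_congr rfl fun j _ => ?_
  have hexp : exp (-a * y) * exp (-y / γ) * exp (-y / γ) ^ j = exp (-(a + (j + 1) / γ) * y) := by
    rw [← exp_nat_mul, ← exp_add, ← exp_add]
    ring_nf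
  rw [← hexp]
  ring

lemma integral_exp_neg_mul_Ioi {b : ℝ} (hb : 0 < b) :
    ∫ y in Set.Ioi (0 : ℝ), exp (-b * y) = 1 / b := by
  rw [integral_exp_mul_Ioi (neg_neg_of_pos hb), mul_zero, exp_zero, div_neg, neg_div, neg_neg]

lemma rate_pos_of_mul_add_one_pos {a γ : ℝ} (hγ : 0 < γ) (ha : 0 < a * γ + 1) (j : ℕ) :
    0 < a + (j + 1) / γ := by
  have hrate : a + (j + 1) / γ = (a * γ + 1 + j) / γ := by
    field_simp
    ring
  rw [hrate]
  exact div_pos (by linarith [j.cast_nonneg (α := ℝ)]) hγ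

lemma integrableOn_exp_neg_mul_mul_one_sub_exp_pow {a γ : ℝ} (hγ : 0 < γ) (ha : 0 < a * γ + 1)
    (m : ℕ) :
    IntegrableOn
      (fun y => exp (-a * y) * (((m + 1 : ℕ) : ℝ) / γ * exp (-y / γ) * (1 - exp (-y / γ)) ^ m))
      (Set.Ioi 0) := by
  simp_rw [exp_neg_mul_mul_one_sub_exp_pow_eq_sum]
  exact integrable_finsetSum _ fun j _ =>
    (integrableOn_exp_mul_Ioi (neg_neg_of_pos (rate_pos_of_mul_add_one_pos hγ ha j)) 0).const_mul _

lemma integral_exp_neg_mul_mul_one_sub_exp_pow {a γ : ℝ} (hγ : 0 < γ) (ha : 0 < a * γ + 1)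
    (m : ℕ) :
    ∫ y in Set.Ioi (0 : ℝ),
        exp (-a * y) * (((m + 1 : ℕ) : ℝ) / γ * exp (-y / γ) * (1 - exp (-y / γ)) ^ m) =
      ((m + 1 : ℕ) : ℝ) * Beta (a * γ + 1) ((m + 1 : ℕ) : ℝ) := by
  have hb := rate_pos_of_mul_add_one_pos hγ ha
  simp_rw [exp_neg_mul_mul_one_sub_exp_pow_eq_sum]
  rw [integral_finsetSum _ fun j _ =>
      (integrableOn_exp_mul_Ioi (neg_neg_of_pos (hb j)) 0).const_mul _,
    Nat.cast_succ, Beta_natCast_add_one ha, mul_sum]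
  refine sum_congr rfl fun j _ => ?_
  rw [integral_const_mul, integral_exp_neg_mul_Ioi (hb j)]
  have hbj := hb j
  have hxj : 0 < a * γ + 1 + j := by linarith [j.cast_nonneg (α := ℝ)]
  field_simp
  ring

theorem gnc_sop_partial_csi_general (M k₂ : ℕ)
    (γD γE ξ : ℝ) (hγD : 0 < γD) (hγE : 0 < γE) (hξ : 1 < ξ) :
    ∫ y in Set.Ioi (0:ℝ),
        (1 - Real.exp (-(ξ * (1 + y) - 1) / γD)) ^ (M + k₂) *
          (((M * k₂ + 1 : ℕ) : ℝ) / γE * Real.exp (-y / γE) *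
            (1 - Real.exp (-y / γE)) ^ (M * k₂)) =
      ((M * k₂ + 1 : ℕ) : ℝ) *
        ∑ i ∈ Finset.range (M + k₂ + 1),
          ((M + k₂).choose i : ℝ) * (-1 : ℝ) ^ i *
            Real.exp (-((ξ - 1) / γD) * (i : ℝ)) *
            Beta ((ξ * γE * (i : ℝ) + γD) / γD) ((M * k₂ + 1 : ℕ) : ℝ) := by
  have hrate : ∀ i : ℕ, 0 < ξ * i / γD * γE + 1 := fun i => by
    have : 0 ≤ ξ := by linarith
    positivity
  have hexpand : ∀ y, (1 - exp (-(ξ * (1 + y) - 1) / γD)) ^ (M + k₂) =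
      ∑ i ∈ range (M + k₂ + 1), ((M + k₂).choose i : ℝ) * (-1) ^ i *
        exp (-((ξ - 1) / γD) * i) * exp (-(ξ * i / γD) * y) := fun y => by
    rw [one_sub_pow_eq_sum]
    refine sum_congr rfl fun i _ => ?_
    rw [mul_assoc _ (exp _), ← exp_add, ← exp_nat_mul]
    congr 2
    ring
  simp_rw [hexpand, sum_mul, mul_assoc _ (exp (-(ξ * _ / γD) * _))]
  rw [integral_finsetSum _ fun i _ =>
    (integrableOn_exp_neg_mul_mul_one_sub_exp_pow hγE (hrate i) _).const_mul _]
  simp_rw [integral_const_mul, integral_exp_neg_mul_mul_one_sub_exp_pow hγE (hrate _)]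
  rw [mul_sum]
  refine sum_congr rfl fun i _ => ?_
  rw [show ξ * i / γD * γE + 1 = (ξ * γE * i + γD) / γD by field_simp]
  ring

/-- Theorem 1: the secrecy outage probability of the `M`-source GNC scheme with
partial CSI equals `(Mk₂+1) Σᵢ C(M+k₂, i) (-1)^i e^{-(ξ-1)i/γ_D} B((ξγ_E i + γ_D)/γ_D, Mk₂+1)`. -/
theorem gnc_sop_partial_csi (M k₂ : ℕ) (hM : 2 ≤ M) (hk₂ : 1 ≤ k₂)
    (γD γE ξ : ℝ) (hγD : 0 < γD) (hγE : 0 < γE) (hξ : 1 < ξ) :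
    ∫ y in Set.Ioi (0:ℝ),
        (1 - Real.exp (-(ξ * (1 + y) - 1) / γD)) ^ (M + k₂) *
          (((M * k₂ + 1 : ℕ) : ℝ) / γE * Real.exp (-y / γE) *
            (1 - Real.exp (-y / γE)) ^ (M * k₂)) =
      ((M * k₂ + 1 : ℕ) : ℝ) *
        ∑ i ∈ Finset.range (M + k₂ + 1),
          ((M + k₂).choose i : ℝ) * (-1 : ℝ) ^ i *
            Real.exp (-((ξ - 1) / γD) * (i : ℝ)) *
            Beta ((ξ * γE * (i : ℝ) + γD) / γD) ((M * k₂ + 1 : ℕ) : ℝ) :=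
  gnc_sop_partial_csi_general M k₂ γD γE ξ hγD hγE hξ
end

section
/- Let M ≥ 2 and k₂ ≥ 1 be integers, let γ_E > 0 and ξ > 1 be real numbers, and for γ > 0 define S(γ) = ∫₀^∞ [1 − e^{−(ξ(1+y)−1)/γ}]^{M+k₂} · ((Mk₂+1)/γ_E) e^{−y/γ_E} [1 − e^{−y/γ_E}]^{Mk₂} dy. Then the diversity order of this secrecy outage probability is M + k₂, i.e., lim_{γ → ∞} (−log S(γ))/(log γ) = M + k₂. (This is Corollary 1: the diversity order of the M-source GNC scheme with parameters (k₁,k₂) is not reduced due to secrecy constraints and remains M + k₂.) -/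
/-!
The outage probability is squeezed between two multiples of `γ ^ (-(M + k₂))`. From above,
`1 - e^{-t} ≤ t` bounds the destination CDF at threshold `ξ (1 + y) - 1` by `(ξ (1 + y) / γ) ^ (M + k₂)`,
which the eavesdropper density integrates to a finite moment. From below, the CDF is monotone in the
threshold, the threshold is at least `ξ - 1 > 0`, and `1 - e^{-t} ≥ t / 2` on `[0, 1]`. Taking
logarithms, `-log S(γ) / log γ = M + k₂ + O(1 / log γ)`.
-/

open MeasureTheory Real Filter Topology Set

lemma tendsto_neg_log_div_log_of_le_of_le {f : ℝ → ℝ} {c₁ c₂ d : ℝ} (hc₁ : 0 < c₁)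
    (hlower : ∀ᶠ γ in atTop, c₁ / γ ^ d ≤ f γ) (hupper : ∀ᶠ γ in atTop, f γ ≤ c₂ / γ ^ d) :
    Tendsto (fun γ => -log (f γ) / log γ) atTop (𝓝 d) := by
  have hlim : ∀ c : ℝ, Tendsto (fun γ => d - log c / log γ) atTop (𝓝 d) := fun c => by
    simpa using tendsto_const_nhds.sub (tendsto_const_nhds.div_atTop tendsto_log_atTop)
  have hlog_div : ∀ {c γ : ℝ}, 0 < c → 0 < γ → log (c / γ ^ d) = log c - d * log γ :=
    fun hc hγ => by rw [log_div hc.ne' (rpow_pos_of_pos hγ d).ne', log_rpow hγ]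
  refine tendsto_of_tendsto_of_tendsto_of_le_of_le' (hlim c₂) (hlim c₁) ?_ ?_
  all_goals
    filter_upwards [hlower, hupper, eventually_gt_atTop 1] with γ hlow hup hγ
    have hlogγ : 0 < log γ := log_pos hγ
    have hγ0 : 0 < γ := by linarith
    have hf : 0 < f γ := (div_pos hc₁ (rpow_pos_of_pos hγ0 d)).trans_le hlow
    rw [sub_div' hlogγ.ne', div_le_div_iff_of_pos_right hlogγ]
  · have hc₂ : 0 < c₂ := (div_pos_iff_of_pos_right (rpow_pos_of_pos hγ0 d)).mp (hf.trans_le hup)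
    have := log_le_log hf hup
    rw [hlog_div hc₂ hγ0] at this
    linarith
  · have := log_le_log (div_pos hc₁ (rpow_pos_of_pos hγ0 d)) hlow
    rw [hlog_div hc₁ hγ0] at this
    linarith

lemma div_two_le_one_sub_exp_neg {t : ℝ} (h0 : 0 ≤ t) (h1 : t ≤ 1) :
    t / 2 ≤ 1 - exp (-t) := by
  have hinv : exp (-t) * exp t = 1 := by rw [← exp_add, neg_add_cancel, exp_zero]
  nlinarith [add_one_le_exp t, exp_pos (-t)]

-- `t ^ n / n! ≤ exp t` at `t = (1 + y) / (2 β)`, spending half of the decay of `exp (-y / β)`.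
lemma one_add_pow_mul_exp_neg_div_le (n : ℕ) {β y : ℝ} (hβ : 0 < β) (hy : 0 ≤ y) :
    (1 + y) ^ n * exp (-y / β) ≤
      n.factorial * (2 * β) ^ n * exp (1 / (2 * β)) * exp (-(1 / (2 * β)) * y) := by
  have hpow := pow_div_factorial_le_exp ((1 + y) / (2 * β)) (by positivity) n
  rw [div_pow, div_div, div_le_iff₀ (by positivity)] at hpow
  have hexp : exp ((1 + y) / (2 * β)) * exp (-y / β) =
      exp (1 / (2 * β)) * exp (-(1 / (2 * β)) * y) := by
    rw [← exp_add, ← exp_add]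
    congr 1
    field_simp
    ring
  calc (1 + y) ^ n * exp (-y / β)
      ≤ exp ((1 + y) / (2 * β)) * ((2 * β) ^ n * n.factorial) * exp (-y / β) := by
        gcongr
    _ = _ := by linear_combination ((2 * β) ^ n * n.factorial) * hexp

lemma integrableOn_one_add_pow_mul_exp_neg_div (n : ℕ) {β : ℝ} (hβ : 0 < β) :
    IntegrableOn (fun y => (1 + y) ^ n * exp (-y / β)) (Ioi 0) := by
  refine ((exp_neg_integrableOn_Ioi 0 (by positivity : 0 < 1 / (2 * β))).const_mul
    (n.factorial * (2 * β) ^ n * exp (1 / (2 * β)))).mono'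
    (by fun_prop : Continuous _).aestronglyMeasurable ?_
  refine (ae_restrict_iff' measurableSet_Ioi).2 (Eventually.of_forall fun y (hy : 0 < y) => ?_)
  rw [norm_of_nonneg (by positivity)]
  exact one_add_pow_mul_exp_neg_div_le n hβ hy.le

/- The paper's `F_{γD}` is `maxExpCdf (M + k₂) γ_D` and its `p_{γE}` is `maxExpPdf (M k₂) γ_E`:
the CDF of the maximum of `n` i.i.d. exponential variables of mean `γ`, and the density of the maximum
of `m + 1` such variables of mean `β`. -/
noncomputable def maxExpCdf (n : ℕ) (γ x : ℝ) : ℝ := (1 - exp (-x / γ)) ^ n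

noncomputable def maxExpPdf (m : ℕ) (β y : ℝ) : ℝ :=
  ((m + 1 : ℕ) : ℝ) / β * exp (-y / β) * (1 - exp (-y / β)) ^ m

lemma one_sub_exp_neg_div_nonneg {x β : ℝ} (hx : 0 ≤ x) (hβ : 0 ≤ β) : 0 ≤ 1 - exp (-x / β) := by
  have : exp (-x / β) ≤ 1 := exp_le_one_iff.2 (div_nonpos_of_nonpos_of_nonneg (by linarith) hβ)
  linarith

section MaxExpCdf

variable {n : ℕ} {γ x : ℝ}

lemma maxExpCdf_nonneg (hγ : 0 ≤ γ) (hx : 0 ≤ x) : 0 ≤ maxExpCdf n γ x :=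
  pow_nonneg (one_sub_exp_neg_div_nonneg hx hγ) n

lemma maxExpCdf_le_one (hγ : 0 ≤ γ) (hx : 0 ≤ x) : maxExpCdf n γ x ≤ 1 :=
  pow_le_one₀ (one_sub_exp_neg_div_nonneg hx hγ) (by linarith [exp_pos (-x / γ)])

lemma maxExpCdf_le_div_pow (hγ : 0 ≤ γ) (hx : 0 ≤ x) : maxExpCdf n γ x ≤ (x / γ) ^ n := by
  refine pow_le_pow_left₀ (one_sub_exp_neg_div_nonneg hx hγ) ?_ n
  linarith [neg_div γ x ▸ one_sub_le_exp_neg (x / γ)]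

lemma div_two_mul_pow_le_maxExpCdf (hx : 0 ≤ x) (hxγ : x ≤ γ) :
    (x / (2 * γ)) ^ n ≤ maxExpCdf n γ x := by
  have ht : 0 ≤ x / γ := div_nonneg hx (hx.trans hxγ)
  refine pow_le_pow_left₀ (div_nonneg hx (by linarith)) ?_ n
  calc x / (2 * γ) = x / γ / 2 := by rw [div_div, mul_comm]
    _ ≤ 1 - exp (-(x / γ)) := div_two_le_one_sub_exp_neg ht (div_le_one_of_le₀ hxγ (hx.trans hxγ))
    _ = 1 - exp (-x / γ) := by rw [neg_div]

lemma monotoneOn_maxExpCdf (hγ : 0 < γ) : MonotoneOn (maxExpCdf n γ) (Ici 0) :=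
  fun x (hx : 0 ≤ x) y _ hxy => pow_le_pow_left₀ (one_sub_exp_neg_div_nonneg hx hγ.le)
    (by gcongr) n

end MaxExpCdf

section OutageIntegral

variable {p : ℝ → ℝ} {n : ℕ} {ξ γ : ℝ}

lemma integrableOn_maxExpCdf_mul (hξ : 1 ≤ ξ) (hγ : 0 < γ) (hp : IntegrableOn p (Ioi 0)) :
    IntegrableOn (fun y => maxExpCdf n γ (ξ * (1 + y) - 1) * p y) (Ioi 0) := by
  refine hp.bdd_mul (c := 1) (by unfold maxExpCdf; fun_prop : Continuous _).aestronglyMeasurable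
    ((ae_restrict_iff' measurableSet_Ioi).2 (Eventually.of_forall fun y (hy : 0 < y) => ?_))
  have hx : 0 ≤ ξ * (1 + y) - 1 := by nlinarith
  rw [norm_of_nonneg (maxExpCdf_nonneg hγ.le hx)]
  exact maxExpCdf_le_one hγ.le hx

lemma setIntegral_maxExpCdf_mul_le (hξ : 1 ≤ ξ) (hγ : 0 < γ) (hp_nonneg : ∀ y, 0 < y → 0 ≤ p y)
    (hp : IntegrableOn p (Ioi 0)) (hp_moment : IntegrableOn (fun y => (1 + y) ^ n * p y) (Ioi 0)) :
    ∫ y in Ioi 0, maxExpCdf n γ (ξ * (1 + y) - 1) * p y ≤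
      ξ ^ n * (∫ y in Ioi 0, (1 + y) ^ n * p y) / γ ^ n := by
  calc ∫ y in Ioi 0, maxExpCdf n γ (ξ * (1 + y) - 1) * p y
      ≤ ∫ y in Ioi 0, (ξ / γ) ^ n * ((1 + y) ^ n * p y) := by
        refine setIntegral_mono_on (integrableOn_maxExpCdf_mul hξ hγ hp)
          (hp_moment.const_mul _) measurableSet_Ioi fun y (hy : 0 < y) => ?_
        have hx : 0 ≤ ξ * (1 + y) - 1 := by nlinarith
        calc maxExpCdf n γ (ξ * (1 + y) - 1) * p y
            ≤ ((ξ * (1 + y) - 1) / γ) ^ n * p y :=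
              mul_le_mul_of_nonneg_right (maxExpCdf_le_div_pow hγ.le hx) (hp_nonneg y hy)
          _ ≤ (ξ * (1 + y) / γ) ^ n * p y := by
              gcongr
              · exact hp_nonneg y hy
              · linarith
          _ = (ξ / γ) ^ n * ((1 + y) ^ n * p y) := by rw [mul_div_right_comm, mul_pow]; ring
    _ = ξ ^ n * (∫ y in Ioi 0, (1 + y) ^ n * p y) / γ ^ n := by
        rw [integral_const_mul, div_pow]
        ring

lemma le_setIntegral_maxExpCdf_mul (hξ : 1 ≤ ξ) (hγ : 0 < γ) (hξγ : ξ - 1 ≤ γ)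
    (hp_nonneg : ∀ y, 0 < y → 0 ≤ p y) (hp : IntegrableOn p (Ioi 0)) :
    ((ξ - 1) / 2) ^ n * (∫ y in Ioi 0, p y) / γ ^ n ≤
      ∫ y in Ioi 0, maxExpCdf n γ (ξ * (1 + y) - 1) * p y := by
  calc ((ξ - 1) / 2) ^ n * (∫ y in Ioi 0, p y) / γ ^ n
      = ∫ y in Ioi 0, ((ξ - 1) / (2 * γ)) ^ n * p y := by
        rw [integral_const_mul, ← div_div, div_pow _ γ]
        ring
    _ ≤ ∫ y in Ioi 0, maxExpCdf n γ (ξ * (1 + y) - 1) * p y := by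
        refine setIntegral_mono_on (hp.const_mul _) (integrableOn_maxExpCdf_mul hξ hγ hp)
          measurableSet_Ioi fun y (hy : 0 < y) => mul_le_mul_of_nonneg_right ?_ (hp_nonneg y hy)
        calc ((ξ - 1) / (2 * γ)) ^ n ≤ maxExpCdf n γ (ξ - 1) :=
              div_two_mul_pow_le_maxExpCdf (by linarith) hξγ
          _ ≤ maxExpCdf n γ (ξ * (1 + y) - 1) :=
              monotoneOn_maxExpCdf hγ (by simpa using hξ) (by simp only [mem_Ici]; nlinarith)
                (by nlinarith)

end OutageIntegral

section MaxExpPdf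

variable {m : ℕ} {β : ℝ}

lemma maxExpPdf_nonneg (hβ : 0 < β) {y : ℝ} (hy : 0 ≤ y) : 0 ≤ maxExpPdf m β y :=
  have := one_sub_exp_neg_div_nonneg hy hβ.le
  by unfold maxExpPdf; positivity

lemma maxExpPdf_pos (hβ : 0 < β) {y : ℝ} (hy : 0 < y) : 0 < maxExpPdf m β y := by
  have : exp (-y / β) < 1 := exp_lt_one_iff.2 (div_neg_of_neg_of_pos (by linarith) hβ)
  have : 0 < 1 - exp (-y / β) := by linarith
  unfold maxExpPdf
  positivity

lemma integrableOn_one_add_pow_mul_maxExpPdf (n : ℕ) (hβ : 0 < β) :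
    IntegrableOn (fun y => (1 + y) ^ n * maxExpPdf m β y) (Ioi 0) := by
  refine ((integrableOn_one_add_pow_mul_exp_neg_div n hβ).const_mul ((m + 1 : ℕ) / β)).mono'
    (by unfold maxExpPdf; fun_prop : Continuous _).aestronglyMeasurable ?_
  refine (ae_restrict_iff' measurableSet_Ioi).2 (Eventually.of_forall fun y (hy : 0 < y) => ?_)
  have h0 := one_sub_exp_neg_div_nonneg hy.le hβ.le
  rw [norm_of_nonneg (mul_nonneg (by positivity) (maxExpPdf_nonneg hβ hy.le))]
  calc (1 + y) ^ n * maxExpPdf m β y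
      ≤ (1 + y) ^ n * ((m + 1 : ℕ) / β * exp (-y / β) * 1) := by
        unfold maxExpPdf
        gcongr
        exact pow_le_one₀ h0 (by linarith [exp_pos (-y / β)])
    _ = _ := by ring

lemma integrableOn_maxExpPdf (hβ : 0 < β) : IntegrableOn (maxExpPdf m β) (Ioi 0) := by
  simpa using integrableOn_one_add_pow_mul_maxExpPdf (m := m) 0 hβ

lemma setIntegral_maxExpPdf_pos (hβ : 0 < β) : 0 < ∫ y in Ioi 0, maxExpPdf m β y := by
  have hsupp : Ioi 0 ⊆ Function.support (maxExpPdf m β) := fun y hy => (maxExpPdf_pos hβ hy).ne'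
  rw [setIntegral_pos_iff_support_of_nonneg_ae
    ((ae_restrict_iff' measurableSet_Ioi).2 (Eventually.of_forall fun y (hy : 0 < y) =>
      maxExpPdf_nonneg hβ hy.le)) (integrableOn_maxExpPdf hβ),
    inter_eq_right.2 hsupp, volume_Ioi]
  exact ENNReal.zero_lt_top

end MaxExpPdf

theorem gnc_diversity_order_general (M k₂ : ℕ)
    (γE ξ : ℝ) (hγE : 0 < γE) (hξ : 1 < ξ) (S : ℝ → ℝ)
    (hS : ∀ γ : ℝ, 0 < γ → S γ =
      ∫ y in Set.Ioi (0:ℝ),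
        (1 - Real.exp (-(ξ * (1 + y) - 1) / γ)) ^ (M + k₂) *
          (((M * k₂ + 1 : ℕ) : ℝ) / γE * Real.exp (-y / γE) *
            (1 - Real.exp (-y / γE)) ^ (M * k₂))) :
    Tendsto (fun γ : ℝ => -Real.log (S γ) / Real.log γ) atTop
      (𝓝 ((M + k₂ : ℕ) : ℝ)) := by
  have hS' : ∀ γ, 0 < γ →
      S γ = ∫ y in Ioi 0, maxExpCdf (M + k₂) γ (ξ * (1 + y) - 1) * maxExpPdf (M * k₂) γE y := hS
  have hc₁ : 0 < ((ξ - 1) / 2) ^ (M + k₂) * ∫ y in Ioi 0, maxExpPdf (M * k₂) γE y :=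
    mul_pos (pow_pos (by linarith) _) (setIntegral_maxExpPdf_pos hγE)
  refine tendsto_neg_log_div_log_of_le_of_le hc₁
    (c₂ := ξ ^ (M + k₂) * ∫ y in Ioi 0, (1 + y) ^ (M + k₂) * maxExpPdf (M * k₂) γE y) ?_ ?_
  · filter_upwards [eventually_ge_atTop (ξ - 1), eventually_gt_atTop 0] with γ hξγ hγ
    rw [hS' γ hγ, rpow_natCast]
    exact le_setIntegral_maxExpCdf_mul hξ.le hγ hξγ (fun y hy => maxExpPdf_nonneg hγE hy.le)
      (integrableOn_maxExpPdf hγE)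
  · filter_upwards [eventually_gt_atTop 0] with γ hγ
    rw [hS' γ hγ, rpow_natCast]
    exact setIntegral_maxExpCdf_mul_le hξ.le hγ (fun y hy => maxExpPdf_nonneg hγE hy.le)
      (integrableOn_maxExpPdf hγE) (integrableOn_one_add_pow_mul_maxExpPdf _ hγE)

/-- Corollary 1: the diversity order of the `M`-source GNC scheme with secrecy
constraints (partial CSI) remains `M + k₂`. -/
theorem gnc_diversity_order (M k₂ : ℕ) (hM : 2 ≤ M) (hk₂ : 1 ≤ k₂)
    (γE ξ : ℝ) (hγE : 0 < γE) (hξ : 1 < ξ) (S : ℝ → ℝ)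
    (hS : ∀ γ : ℝ, 0 < γ → S γ =
      ∫ y in Set.Ioi (0:ℝ),
        (1 - Real.exp (-(ξ * (1 + y) - 1) / γ)) ^ (M + k₂) *
          (((M * k₂ + 1 : ℕ) : ℝ) / γE * Real.exp (-y / γE) *
            (1 - Real.exp (-y / γE)) ^ (M * k₂))) :
    Tendsto (fun γ : ℝ => -Real.log (S γ) / Real.log γ) atTop
      (𝓝 ((M + k₂ : ℕ) : ℝ)) :=
  gnc_diversity_order_general M k₂ γE ξ hγE hξ S hS
end

section
/- Let k₁ ≥ 1 and k₂ ≥ 1 be integers, t_D > 0 and t_E > 0 real numbers, and γ_E > 0. Define, for p ∈ [0,1], O₁(p) = p · Σ_{i=0}^{2k₁−1} C(2k₁+2k₂−1, 2k₂+i) p^{2k₂+i} (1−p)^{2k₁−1−i} and O₂(p) = p · Σ_{i=0}^{k₁−1} C(k₁+k₂−1, k₂+i) p^{k₂+i} (1−p)^{k₁−1−i}, and O_GNC(p) = (1−p)·O₁(p) + p·O₂(p). Let p_E = 1 − e^{−t_E/γ_E} (a constant) and for γ > 0 let p_D(γ) = 1 − e^{−t_D/γ}. Then the secrecy outage probability without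 CSI, S(γ) = O_GNC(p_D(γ)) + (1 − O₁(p_E)) − O_GNC(p_D(γ))·(1 − O₁(p_E)), satisfies lim_{γ → ∞} S(γ) = 1 − O₁(p_E). (This is Theorem 2: when the SNR of the legitimate nodes increases without limit, the SOP of the GNC scheme presents an outage floor given by 1 − O₁(R_E, γ_E).) -/
open Real Filter Topology Finset

/-
As the legitimate SNR γ grows, the outage probability `p_D(γ) = 1 - e^{-t_D/γ}` of every
legitimate link tends to `0`. The GNC outage probability `O_GNC` is a polynomial vanishing at
`0`, so `O_GNC(p_D(γ)) → 0`, and the union bound `O_D + q - O_D q` for the independent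
reliability and secrecy outages tends to the eavesdropper term `q = 1 - O₁(p_E)` alone.
-/

lemma tendsto_one_sub_exp_neg_div_atTop (c : ℝ) :
    Tendsto (fun γ : ℝ => 1 - exp (-c / γ)) atTop (𝓝 0) := by
  have hdiv : Tendsto (fun γ : ℝ => -c / γ) atTop (𝓝 0) := by
    simpa only [div_eq_mul_inv, mul_zero] using tendsto_inv_atTop_zero.const_mul (-c)
  simpa using tendsto_const_nhds (x := (1 : ℝ)).sub ((continuous_exp.tendsto 0).comp hdiv)

lemma tendsto_add_sub_mul_of_tendsto_zero {α : Type*} {l : Filter α} {f : α → ℝ}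
    (hf : Tendsto f l (𝓝 0)) (q : ℝ) :
    Tendsto (fun x => f x + q - f x * q) l (𝓝 q) := by
  simpa using (hf.add_const q).sub (hf.mul_const q)

theorem gnc_sop_no_csi_floor_general (k₁ k₂ : ℕ)
    (tD : ℝ)
    (O₁ O₂ OGNC : ℝ → ℝ)
    (hO₁ : ∀ p : ℝ, O₁ p = p * ∑ i ∈ Finset.range (2 * k₁),
        ((2 * k₁ + 2 * k₂ - 1).choose (2 * k₂ + i) : ℝ) * p ^ (2 * k₂ + i) *
          (1 - p) ^ (2 * k₁ - 1 - i))
    (hO₂ : ∀ p : ℝ, O₂ p = p * ∑ i ∈ Finset.range k₁,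
        ((k₁ + k₂ - 1).choose (k₂ + i) : ℝ) * p ^ (k₂ + i) * (1 - p) ^ (k₁ - 1 - i))
    (hOGNC : ∀ p : ℝ, OGNC p = (1 - p) * O₁ p + p * O₂ p)
    (pE : ℝ)
    (pD : ℝ → ℝ) (hpD : ∀ γ : ℝ, 0 < γ → pD γ = 1 - Real.exp (-tD / γ))
    (S : ℝ → ℝ)
    (hs : ∀ γ : ℝ, 0 < γ →
      S γ = OGNC (pD γ) + (1 - O₁ pE) - OGNC (pD γ) * (1 - O₁ pE)) :
    Tendsto S atTop (𝓝 (1 - O₁ pE)) := by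
  have hO₁_cont : Continuous O₁ := by rw [funext hO₁]; fun_prop
  have hO₂_cont : Continuous O₂ := by rw [funext hO₂]; fun_prop
  have hOGNC_cont : Continuous OGNC := by rw [funext hOGNC]; fun_prop
  have hOGNC_zero : Tendsto OGNC (𝓝 0) (𝓝 0) := by
    simpa [hOGNC, hO₁] using hOGNC_cont.tendsto 0
  have hpD_zero : Tendsto pD atTop (𝓝 0) :=
    (tendsto_one_sub_exp_neg_div_atTop tD).congr' <| by
      filter_upwards [eventually_gt_atTop 0] with γ hγ using (hpD γ hγ).symm
  refine (tendsto_add_sub_mul_of_tendsto_zero (hOGNC_zero.comp hpD_zero) _).congr' ?_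
  filter_upwards [eventually_gt_atTop 0] with γ hγ using (hs γ hγ).symm

/-- Theorem 2: when the legitimate SNR increases without limit, the no-CSI SOP of the
two-source GNC scheme tends to the outage floor `1 - O₁(p_E)`. -/
theorem gnc_sop_no_csi_floor (k₁ k₂ : ℕ) (hk₁ : 1 ≤ k₁) (hk₂ : 1 ≤ k₂)
    (tD tE γE : ℝ) (htD : 0 < tD) (htE : 0 < tE) (hγE : 0 < γE)
    (O₁ O₂ OGNC : ℝ → ℝ)
    (hO₁ : ∀ p : ℝ, O₁ p = p * ∑ i ∈ Finset.range (2 * k₁),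
        ((2 * k₁ + 2 * k₂ - 1).choose (2 * k₂ + i) : ℝ) * p ^ (2 * k₂ + i) *
          (1 - p) ^ (2 * k₁ - 1 - i))
    (hO₂ : ∀ p : ℝ, O₂ p = p * ∑ i ∈ Finset.range k₁,
        ((k₁ + k₂ - 1).choose (k₂ + i) : ℝ) * p ^ (k₂ + i) * (1 - p) ^ (k₁ - 1 - i))
    (hOGNC : ∀ p : ℝ, OGNC p = (1 - p) * O₁ p + p * O₂ p)
    (pE : ℝ) (hpE : pE = 1 - Real.exp (-tE / γE))
    (pD : ℝ → ℝ) (hpD : ∀ γ : ℝ, 0 < γ → pD γ = 1 - Real.exp (-tD / γ))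
    (S : ℝ → ℝ)
    (hs : ∀ γ : ℝ, 0 < γ →
      S γ = OGNC (pD γ) + (1 - O₁ pE) - OGNC (pD γ) * (1 - O₁ pE)) :
    Tendsto S atTop (𝓝 (1 - O₁ pE)) :=
  gnc_sop_no_csi_floor_general k₁ k₂ tD O₁ O₂ OGNC hO₁ hO₂ hOGNC pE pD hpD S hs
end

section
/- Let X and Y be independent exponential random variables with means γ_D > 0 and γ_E > 0 respectively, and let ξ > 1. Then P(X < ξ(1+Y) − 1) = 1 − (γ_D/(γ_D + ξ γ_E)) · e^{−(ξ−1)/γ_D}. Equivalently, with ξ = 2^{R_s}, the secrecy outage probability of the direct transmission with partial CSI is S_DT^csi = 1 − (γ_D/(γ_D + 2^{R_s} γ_E)) exp(−(2^{R_s}−1)/γ_D). -/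
/-!
Write `r = 1/γ_D`, `q = 1/γ_E`. Conditioning on `Y = y ≥ 0`, the event `X ≥ ξ Y + (ξ - 1)` has
probability `e^{-r(ξ-1)} e^{-rξ y}`, so its probability is `e^{-r(ξ-1)}` times the Laplace transform
`q / (q + rξ)` of `Exp(q)` at `rξ`; the outage event is its complement.
-/

open MeasureTheory ProbabilityTheory Real Set

namespace ProbabilityTheory

lemma IndepFun.measure_preimage_eq_prod {Ω α β : Type*} [MeasurableSpace Ω] [MeasurableSpace α]
    [MeasurableSpace β] {P : Measure Ω} [IsFiniteMeasure P] {X : Ω → α} {Y : Ω → β}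
    {μ : Measure α} {ν : Measure β} [NeZero μ] [NeZero ν] (hXY : IndepFun X Y P)
    (hX : P.map X = μ) (hY : P.map Y = ν) {s : Set (α × β)} (hs : MeasurableSet s) :
    P ((fun ω ↦ (X ω, Y ω)) ⁻¹' s) = μ.prod ν s := by
  have hXm : AEMeasurable X P := aemeasurable_of_map_neZero (hX ▸ inferInstance)
  have hYm : AEMeasurable Y P := aemeasurable_of_map_neZero (hY ▸ inferInstance)
  rw [← Measure.map_apply_of_aemeasurable (hXm.prodMk hYm) hs,
    hXY.map_prod_eq_prod_map_map hXm hYm, hX, hY]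

lemma expMeasure_singleton (r t : ℝ) : expMeasure r {t} = 0 :=
  withDensity_absolutelyContinuous _ _ (measure_singleton t)

lemma ae_nonneg_expMeasure (r : ℝ) : ∀ᵐ y ∂expMeasure r, 0 ≤ y := by
  simp only [ae_iff, not_le]
  change volume.withDensity (exponentialPDF r) (Iio 0) = 0
  rw [withDensity_apply _ measurableSet_Iio]
  exact lintegral_exponentialPDF_of_nonpos le_rfl

lemma expMeasure_Ici {r t : ℝ} (hr : 0 < r) (ht : 0 ≤ t) :
    expMeasure r (Ici t) = ENNReal.ofReal (exp (-(r * t))) := by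
  have := isProbabilityMeasure_expMeasure hr
  have hexp : exp (-(r * t)) ≤ 1 := exp_le_one_iff.mpr (by nlinarith)
  rw [← measure_congr (Ioi_ae_eq_Ici' (expMeasure_singleton r t)), ← compl_Iic,
    prob_compl_eq_one_sub measurableSet_Iic, ← ofReal_cdf, cdf_expMeasure_eq hr, if_pos ht,
    ENNReal.ofReal_sub _ (exp_pos _).le, ENNReal.ofReal_one,
    ENNReal.sub_sub_cancel ENNReal.one_ne_top (ENNReal.ofReal_le_one.mpr hexp)]

lemma exponentialPDF_mul_ofReal_exp {r s : ℝ} (hrs : 0 < r + s) (y : ℝ) :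
    exponentialPDF r y * ENNReal.ofReal (exp (-(s * y))) =
      ENNReal.ofReal (r / (r + s)) * exponentialPDF (r + s) y := by
  rcases lt_or_ge y 0 with hy | hy
  · rw [exponentialPDF_of_neg hy, exponentialPDF_of_neg hy, zero_mul, mul_zero]
  rw [exponentialPDF_of_nonneg hy, exponentialPDF_of_nonneg hy,
    ← ENNReal.ofReal_mul' (exp_pos _).le, ← ENNReal.ofReal_mul' (by positivity)]
  congr 1
  rw [← mul_assoc, div_mul_cancel₀ _ hrs.ne', mul_assoc, ← exp_add]
  ring_nf

lemma lintegral_ofReal_exp_neg_mul_expMeasure {r s : ℝ} (hrs : 0 < r + s) :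
    ∫⁻ y, ENNReal.ofReal (exp (-(s * y))) ∂expMeasure r = ENNReal.ofReal (r / (r + s)) := by
  change ∫⁻ y, _ ∂volume.withDensity (exponentialPDF r) = _
  have hpdf : Measurable (exponentialPDF r) := (measurable_exponentialPDFReal r).ennreal_ofReal
  rw [lintegral_withDensity_eq_lintegral_mul _ hpdf (by fun_prop)]
  simp only [Pi.mul_apply, exponentialPDF_mul_ofReal_exp hrs]
  rw [lintegral_const_mul' _ _ ENNReal.ofReal_ne_top, lintegral_exponentialPDF_eq_one hrs,
    mul_one]

variable {r q a b : ℝ}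

lemma expMeasure_prod_expMeasure_setOf_le (hr : 0 < r) (hq : 0 < q) (ha : 0 ≤ a) (hb : 0 ≤ b) :
    (expMeasure r).prod (expMeasure q) {p | a * p.2 + b ≤ p.1} =
      ENNReal.ofReal (q / (q + r * a) * exp (-(r * b))) := by
  have := isProbabilityMeasure_expMeasure hr
  have := isProbabilityMeasure_expMeasure hq
  have hs : MeasurableSet {p : ℝ × ℝ | a * p.2 + b ≤ p.1} := measurableSet_le (by fun_prop)
    (by fun_prop)
  have hsection : ∀ᵐ y ∂expMeasure q,
      expMeasure r ((fun x ↦ (x, y)) ⁻¹' {p | a * p.2 + b ≤ p.1}) =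
        ENNReal.ofReal (exp (-(r * b))) * ENNReal.ofReal (exp (-(r * a * y))) := by
    filter_upwards [ae_nonneg_expMeasure q] with y hy
    change expMeasure r (Ici (a * y + b)) = _
    rw [← ENNReal.ofReal_mul (exp_pos _).le, ← exp_add, expMeasure_Ici hr (by positivity)]
    ring_nf
  rw [Measure.prod_apply_symm hs, lintegral_congr_ae hsection,
    lintegral_const_mul' _ _ ENNReal.ofReal_ne_top,
    lintegral_ofReal_exp_neg_mul_expMeasure (by positivity),
    ← ENNReal.ofReal_mul (exp_pos _).le, mul_comm]

lemma expMeasure_prod_expMeasure_setOf_lt (hr : 0 < r) (hq : 0 < q) (ha : 0 ≤ a) (hb : 0 ≤ b) :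
    (expMeasure r).prod (expMeasure q) {p | p.1 < a * p.2 + b} =
      ENNReal.ofReal (1 - q / (q + r * a) * exp (-(r * b))) := by
  have := isProbabilityMeasure_expMeasure hr
  have := isProbabilityMeasure_expMeasure hq
  have hs : MeasurableSet {p : ℝ × ℝ | a * p.2 + b ≤ p.1} := measurableSet_le (by fun_prop)
    (by fun_prop)
  have hcompl : {p : ℝ × ℝ | p.1 < a * p.2 + b} = {p | a * p.2 + b ≤ p.1}ᶜ := by
    ext p
    simp [not_le]
  rw [hcompl, prob_compl_eq_one_sub hs, expMeasure_prod_expMeasure_setOf_le hr hq ha hb,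
    ENNReal.ofReal_sub _ (by positivity), ENNReal.ofReal_one]

end ProbabilityTheory

/-- The secrecy outage probability of the direct transmission with partial CSI:
for independent exponentials `X` (mean `γ_D`) and `Y` (mean `γ_E`) and `ξ > 1`,
`P(X < ξ(1+Y) - 1) = 1 - (γ_D/(γ_D + ξγ_E)) e^{-(ξ-1)/γ_D}`. -/
theorem sop_dt_partial_csi {Ω : Type*} [MeasureSpace Ω]
    [IsProbabilityMeasure (ℙ : Measure Ω)]
    (X Y : Ω → ℝ) (γD γE ξ : ℝ) (hγD : 0 < γD) (hγE : 0 < γE) (hξ : 1 < ξ)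
    (hX : Measure.map X ℙ = expMeasure (1 / γD))
    (hY : Measure.map Y ℙ = expMeasure (1 / γE))
    (hXY : IndepFun X Y) :
    ℙ {ω | X ω < ξ * (1 + Y ω) - 1} =
      ENNReal.ofReal (1 - γD / (γD + ξ * γE) * Real.exp (-(ξ - 1) / γD)) := by
  have := isProbabilityMeasure_expMeasure (one_div_pos.mpr hγD)
  have := isProbabilityMeasure_expMeasure (one_div_pos.mpr hγE)
  have hevent : {ω | X ω < ξ * (1 + Y ω) - 1} =
      (fun ω ↦ (X ω, Y ω)) ⁻¹' {p | p.1 < ξ * p.2 + (ξ - 1)} := by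
    ext ω
    simp only [mem_ofPred_eq, mem_preimage]
    ring_nf
  have hratio : (1 / γE) / (1 / γE + 1 / γD * ξ) = γD / (γD + ξ * γE) := by
    field_simp
  have hexponent : -(1 / γD * (ξ - 1)) = -(ξ - 1) / γD := by ring
  rw [hevent, hXY.measure_preimage_eq_prod hX hY
      (measurableSet_lt (by fun_prop) (by fun_prop)),
    expMeasure_prod_expMeasure_setOf_lt (by positivity) (by positivity) (by positivity)
      (by linarith), hratio, hexponent]
end

section
/- Let t > 0 and, for γ > 0, define O(γ) = 1 − e^{−t/γ}, O_MRC(γ) = 1 − e^{−t/γ}(1 + t/γ), O₁(γ) = O(γ)·[3·O(γ)²(1 − O(γ)) + O(γ)³], and O_NC(γ) = (1 − O(γ))·O₁(γ) + O(γ)·O_MRC(γ). Then lim_{γ → ∞} O_NC(γ)/O(γ)³ = 3.5; i.e., at high SNR the overall outage probability of the two-source network-coded cooperative scheme satisfies O_NC(γ) ≈ 3.5·[1 − e^{−(2^{2R}−1)/γ}]³, achieving diversity order 3. -/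
/-!
Writing `x = t/γ → 0⁺` and `O = 1 - e^{-x}`, one has `O₁ = O³(3 - 2O)`, so
`O_NC / O³ = (1 - O)(3 - 2O) + O_MRC / O²`. The first term tends to `3`. The second tends to
`1/2` by l'Hôpital: `O_MRC = 1 - e^{-x}(1 + x)` has derivative `x e^{-x}` and `O²` has
derivative `2 O e^{-x}`, whose ratio is `x / (2(1 - e^{-x})) → 1/2`.
-/

open Real Filter Topology

theorem one_sub_exp_neg_ne_zero {x : ℝ} (hx : x ≠ 0) : 1 - exp (-x) ≠ 0 := by
  rw [sub_ne_zero, ne_comm, Ne, exp_eq_one_iff, neg_eq_zero]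
  exact hx

theorem hasDerivAt_one_sub_exp_neg (x : ℝ) :
    HasDerivAt (fun y => 1 - exp (-y)) (exp (-x)) x := by
  simpa using (hasDerivAt_neg x).exp.const_sub 1

theorem tendsto_one_sub_exp_neg_nhds_zero :
    Tendsto (fun x => 1 - exp (-x)) (𝓝 0) (𝓝 0) := by
  simpa using (hasDerivAt_one_sub_exp_neg 0).continuousAt.tendsto

theorem tendsto_div_one_sub_exp_neg :
    Tendsto (fun x => x / (1 - exp (-x))) (𝓝[≠] 0) (𝓝 1) := by
  have hslope := hasDerivAt_iff_tendsto_slope.mp (hasDerivAt_one_sub_exp_neg 0)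
  rw [neg_zero, exp_zero] at hslope
  simpa [slope_def_field] using hslope.inv₀ one_ne_zero

theorem tendsto_one_sub_exp_neg_mul_one_add_div_sq :
    Tendsto (fun x => (1 - exp (-x) * (1 + x)) / (1 - exp (-x)) ^ 2) (𝓝[≠] 0) (𝓝 (1 / 2)) := by
  have hf (x : ℝ) : HasDerivAt (fun y => 1 - exp (-y) * (1 + y)) (x * exp (-x)) x :=
    ((hasDerivAt_neg x).exp.mul ((hasDerivAt_id x).const_add 1)).const_sub 1
      |>.congr_deriv (by simp only [id]; ring)
  have hg (x : ℝ) : HasDerivAt (fun y => (1 - exp (-y)) ^ 2) (2 * (1 - exp (-x)) * exp (-x)) x :=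
    (hasDerivAt_one_sub_exp_neg x).pow 2 |>.congr_deriv (by ring)
  have hg' : ∀ᶠ x in 𝓝[≠] (0 : ℝ), 2 * (1 - exp (-x)) * exp (-x) ≠ 0 := by
    filter_upwards [self_mem_nhdsWithin] with x hx
    exact mul_ne_zero (mul_ne_zero two_ne_zero (one_sub_exp_neg_ne_zero hx)) (exp_pos _).ne'
  have hfa : Tendsto (fun x => 1 - exp (-x) * (1 + x)) (𝓝[≠] 0) (𝓝 0) := by
    simpa using (hf 0).continuousAt.tendsto.mono_left nhdsWithin_le_nhds
  have hga : Tendsto (fun x => (1 - exp (-x)) ^ 2) (𝓝[≠] 0) (𝓝 0) := by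
    simpa using (tendsto_one_sub_exp_neg_nhds_zero.pow 2).mono_left nhdsWithin_le_nhds
  refine HasDerivAt.lhopital_zero_nhdsNE (.of_forall hf) (.of_forall hg) hg' hfa hga ?_
  refine (tendsto_div_one_sub_exp_neg.div_const 2).congr' ?_
  filter_upwards [self_mem_nhdsWithin] with x hx
  have := one_sub_exp_neg_ne_zero hx
  field_simp

-- `O_NC` as a function of `p = O` and `q = O_MRC`.
def ncOutage (p q : ℝ) : ℝ := (1 - p) * (p * (3 * p ^ 2 * (1 - p) + p ^ 3)) + p * q

theorem ncOutage_div_pow_three {p : ℝ} (hp : p ≠ 0) (q : ℝ) :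
    ncOutage p q / p ^ 3 = (1 - p) * (3 - 2 * p) + q / p ^ 2 := by
  unfold ncOutage
  field_simp
  ring

theorem tendsto_ncOutage_div_pow_three {α : Type*} {l : Filter α} {p q : α → ℝ} {c : ℝ}
    (hp : Tendsto p l (𝓝 0)) (hp0 : ∀ᶠ a in l, p a ≠ 0)
    (hq : Tendsto (fun a => q a / p a ^ 2) l (𝓝 c)) :
    Tendsto (fun a => ncOutage (p a) (q a) / p a ^ 3) l (𝓝 (3 + c)) := by
  have hpoly : Tendsto (fun a => (1 - p a) * (3 - 2 * p a)) l (𝓝 3) := by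
    simpa using ((tendsto_const_nhds (x := 1)).sub hp).mul
      ((tendsto_const_nhds (x := 3)).sub (hp.const_mul 2))
  refine (hpoly.add hq).congr' ?_
  filter_upwards [hp0] with a ha
  rw [← ncOutage_div_pow_three ha]

/-- At high SNR the overall outage probability of the two-source network-coded
cooperative scheme satisfies `O_NC(γ) ≈ 3.5 · O(γ)³`, i.e.
`lim_{γ→∞} O_NC(γ)/O(γ)³ = 3.5`, achieving diversity order 3. -/
theorem nc_outage_high_snr (t : ℝ) (ht : 0 < t)
    (O OMRC O₁ ONC : ℝ → ℝ)
    (hO : ∀ γ : ℝ, O γ = 1 - Real.exp (-t / γ))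
    (hOMRC : ∀ γ : ℝ, OMRC γ = 1 - Real.exp (-t / γ) * (1 + t / γ))
    (hO₁ : ∀ γ : ℝ, O₁ γ = O γ * (3 * (O γ) ^ 2 * (1 - O γ) + (O γ) ^ 3))
    (hONC : ∀ γ : ℝ, ONC γ = (1 - O γ) * O₁ γ + O γ * OMRC γ) :
    Tendsto (fun γ : ℝ => ONC γ / (O γ) ^ 3) atTop (𝓝 (3.5 : ℝ)) := by
  have hx : Tendsto (fun γ => t / γ) atTop (𝓝[≠] 0) :=
    tendsto_nhdsWithin_iff.mpr ⟨tendsto_const_nhds.div_atTop tendsto_id,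
      (eventually_gt_atTop 0).mono fun γ hγ => (div_pos ht hγ).ne'⟩
  have hONC' (γ : ℝ) : ONC γ = ncOutage (O γ) (OMRC γ) := by rw [hONC, hO₁, ncOutage]
  simp only [neg_div] at hO hOMRC
  obtain rfl : O = fun γ => 1 - exp (-(t / γ)) := funext hO
  obtain rfl : OMRC = fun γ => 1 - exp (-(t / γ)) * (1 + t / γ) := funext hOMRC
  simp only [hONC', show (3.5 : ℝ) = 3 + 1 / 2 by norm_num]
  refine tendsto_ncOutage_div_pow_three ?_ ?_ (tendsto_one_sub_exp_neg_mul_one_add_div_sq.comp hx)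
  · exact tendsto_one_sub_exp_neg_nhds_zero.comp (hx.mono_right nhdsWithin_le_nhds)
  · exact hx.eventually self_mem_nhdsWithin |>.mono fun γ => one_sub_exp_neg_ne_zero
end

section
/- Let k₁ ≥ 1 and k₂ ≥ 2 be integers, and define, for p ∈ (0,1], O₁(p) = p · Σ_{i=0}^{2k₁−1} C(2k₁+2k₂−1, 2k₂+i) p^{2k₂+i} (1−p)^{2k₁−1−i}, O₂(p) = p · Σ_{i=0}^{k₁−1} C(k₁+k₂−1, k₂+i) p^{k₂+i} (1−p)^{k₁−1−i}, and O_GNC(p) = (1−p)·O₁(p) + p·O₂(p). Then lim_{p → 0⁺} O_GNC(p)/p^{k₂+2} = C(k₁+k₂−1, k₂); i.e., for the two-source GNC scheme with intersource channels subject to outage, the high-SNR outage probability is approximately C(k₁+k₂−1, k₂)·[1 − e^{−(2^{R/R_GNC}−1)/γ}]^{2+k₂}, achieving diversity order M + k₂ = 2 + k₂. -/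
open Filter Topology Finset

/-!
Both outage terms are upper binomial tails: `O₁(p) = p · T(2k₁, 2k₂)(p)` and
`O₂(p) = p · T(k₁, k₂)(p)`, and `T(n, k)(p) ~ C(n+k-1, k) pᵏ` as `p → 0`, since only the
term with exactly `k` occurrences survives. Hence `(1-p) O₁(p) = O(p^{2k₂+1})` is negligible
against `p^{k₂+2}` because `k₂ ≥ 2`, and `p O₂(p) ~ C(k₁+k₂-1, k₂) p^{k₂+2}`.
-/

/-- The probability that at least `k` of `n + k - 1` independent events of probability `p`
occur. -/
noncomputable def binomialUpperTail (n k : ℕ) (p : ℝ) : ℝ :=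
  ∑ i ∈ range n, ((n + k - 1).choose (k + i) : ℝ) * p ^ (k + i) * (1 - p) ^ (n - 1 - i)

theorem binomialUpperTail_eq_pow_mul (n k : ℕ) (p : ℝ) :
    binomialUpperTail n k p =
      p ^ k * ∑ i ∈ range n, ((n + k - 1).choose (k + i) : ℝ) * p ^ i * (1 - p) ^ (n - 1 - i) := by
  simp only [binomialUpperTail, mul_sum, pow_add]
  exact sum_congr rfl fun i _ => by ring

theorem tendsto_binomialUpperTail_div_pow {n : ℕ} (hn : 0 < n) (k : ℕ) :
    Tendsto (fun p => binomialUpperTail n k p / p ^ k) (𝓝[≠] 0)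
      (𝓝 ((n + k - 1).choose k : ℝ)) := by
  set R : ℝ → ℝ := fun p =>
    ∑ i ∈ range n, ((n + k - 1).choose (k + i) : ℝ) * p ^ i * (1 - p) ^ (n - 1 - i)
  have hR : Continuous R := by fun_prop
  have hR₀ : R 0 = (n + k - 1).choose k := by
    simp only [R]
    rw [sum_eq_single_of_mem 0 (mem_range.mpr hn)]
    · simp
    · intro i _ hi
      simp [zero_pow hi]
  refine ((hR.tendsto' 0 _ hR₀).mono_left nhdsWithin_le_nhds).congr' ?_
  filter_upwards [self_mem_nhdsWithin] with p hp
  rw [binomialUpperTail_eq_pow_mul, mul_div_cancel_left₀ _ (pow_ne_zero _ hp)]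

/-- For the two-source GNC scheme with intersource channels subject to outage, the
high-SNR outage probability is `O_GNC(p) ≈ C(k₁+k₂-1, k₂) p^{k₂+2}` as `p → 0⁺`,
achieving diversity order `2 + k₂`. -/
theorem gnc_outage_with_intersource (k₁ k₂ : ℕ) (hk₁ : 1 ≤ k₁) (hk₂ : 2 ≤ k₂)
    (O₁ O₂ OGNC : ℝ → ℝ)
    (hO₁ : ∀ p : ℝ, O₁ p = p * ∑ i ∈ Finset.range (2 * k₁),
        ((2 * k₁ + 2 * k₂ - 1).choose (2 * k₂ + i) : ℝ) * p ^ (2 * k₂ + i) *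
          (1 - p) ^ (2 * k₁ - 1 - i))
    (hO₂ : ∀ p : ℝ, O₂ p = p * ∑ i ∈ Finset.range k₁,
        ((k₁ + k₂ - 1).choose (k₂ + i) : ℝ) * p ^ (k₂ + i) * (1 - p) ^ (k₁ - 1 - i))
    (hOGNC : ∀ p : ℝ, OGNC p = (1 - p) * O₁ p + p * O₂ p) :
    Tendsto (fun p : ℝ => OGNC p / p ^ (k₂ + 2)) (𝓝[>] (0:ℝ))
      (𝓝 ((k₁ + k₂ - 1).choose k₂ : ℝ)) := by
  obtain ⟨m, rfl⟩ : ∃ m, k₂ = m + 2 := ⟨k₂ - 2, by omega⟩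
  have hsplit : ∀ p ≠ (0 : ℝ), OGNC p / p ^ (m + 2 + 2) =
      (1 - p) * p ^ (m + 1) * (binomialUpperTail (2 * k₁) (2 * (m + 2)) p / p ^ (2 * (m + 2))) +
        binomialUpperTail k₁ (m + 2) p / p ^ (m + 2) := by
    intro p hp
    rw [hOGNC, hO₁, hO₂, ← binomialUpperTail, ← binomialUpperTail]
    field_simp
    ring
  have hvanish : Tendsto (fun p : ℝ => (1 - p) * p ^ (m + 1)) (𝓝[≠] 0) (𝓝 0) := by
    have hcont : Continuous fun p : ℝ => (1 - p) * p ^ (m + 1) := by fun_prop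
    simpa using (hcont.tendsto 0).mono_left nhdsWithin_le_nhds
  have hlim := (hvanish.mul
      (tendsto_binomialUpperTail_div_pow (show 0 < 2 * k₁ by omega) (2 * (m + 2)))).add
    (tendsto_binomialUpperTail_div_pow hk₁ (m + 2))
  rw [zero_mul, zero_add] at hlim
  refine (hlim.mono_left (nhdsGT_le_nhdsNE 0)).congr' ?_
  filter_upwards [self_mem_nhdsWithin] with p hp
  exact (hsplit p hp.ne').symm
end
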